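/- arXiv:math/0603627 — 2 statements merged into one kernel-verified Lean document; each statement's English description precedes it below -/
import Mathlib

section
/- Let d ≥ 1, α ∈ (0,2) with α < d, κ > 0, let 1 < p < ∞ with conjugate exponent q (1/p + 1/q = 1), and let v ≥ 0 with v ∈ L^p(ℝᵈ) ∩ L¹(ℝᵈ) and supp v contained in a bounded measurable set B ⊂ ℝᵈ. Then there is a constant C = C(B,d,α,κ,p) > 0 such that for every ε > 0 and every capacitory potential u_ε of εv with constant κ, the scattering length Γ(εv) = ∫_{ℝᵈ} εv(x)(1−u_ε(x)) dx satisfies 0 ≤ ε‖v‖_{L¹} − Γ(εv) ≤ C ε^{1+1/q} ‖v‖_{L^p} ‖v‖_{L¹}^{1/q}. -/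
/-!
Since `Γ(εv) = ε ∫ v - ε ∫ v u`, everything reduces to bounding `∫ v u`. Dropping `1 - u ≤ 1`
in the defining equation gives `u ≤ κ ε (v * |·|^(α-d))`; the Riesz kernel is locally
integrable, so its integral over the bounded set `B` is bounded uniformly in the centre, and
Tonelli yields `∫_B u ≤ κ C_B ε ‖v‖₁`. As `v` lives on `B` and `u^q ≤ u` for `0 ≤ u ≤ 1`,
Hölder gives `∫ v u ≤ ‖v‖_p (∫_B u)^(1/q)`.
-/

open MeasureTheory ENNReal

def IsCapacitoryPotential (d : ℕ) (α κ : ℝ)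
    (v u : EuclideanSpace ℝ (Fin d) → ℝ) : Prop :=
  Measurable u ∧ (∀ x, 0 ≤ u x ∧ u x ≤ 1) ∧
    ∀ᵐ x : EuclideanSpace ℝ (Fin d),
      u x = κ * ∫ y : EuclideanSpace ℝ (Fin d), v y * (1 - u y) * ‖x - y‖ ^ (α - d)

open Set Metric

section

variable {E : Type*} [NormedAddCommGroup E] [MeasurableSpace E] [BorelSpace E] {μ : Measure E}

lemma lintegral_ball_norm_rpow_lt_top [NormedSpace ℝ E] [FiniteDimensional ℝ E]
    [μ.IsAddHaarMeasure] (hE : 1 ≤ Module.finrank ℝ E) {t : ℝ}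
    (ht : -(Module.finrank ℝ E : ℝ) < t) :
    ∫⁻ x in ball 0 1, ENNReal.ofReal (‖x‖ ^ t) ∂μ < ∞ := by
  refine Integrable.lintegral_lt_top (integrableOn_ball_of_norm_le_rpow (C := 1) (α := -t) hE
    (by linarith) (Filter.Eventually.of_forall fun x => ?_)
    (by fun_prop : Measurable fun x : E => ‖x‖ ^ t).aestronglyMeasurable)
  rw [neg_neg, one_mul, Real.norm_of_nonneg (by positivity)]

lemma setLIntegral_norm_sub_rpow_le [μ.IsAddRightInvariant] {t : ℝ} (ht : t ≤ 0) (B : Set E)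
    (y : E) :
    ∫⁻ x in B, ENNReal.ofReal (‖x - y‖ ^ t) ∂μ ≤
      (∫⁻ z in ball 0 1, ENNReal.ofReal (‖z‖ ^ t) ∂μ) + μ B := by
  set G := (ball (0 : E) 1).indicator fun z => ENNReal.ofReal (‖z‖ ^ t)
  have hpt (z : E) : ENNReal.ofReal (‖z‖ ^ t) ≤ G z + 1 := by
    by_cases hz : z ∈ ball (0 : E) 1
    · simp only [G, indicator_of_mem hz, le_self_add]
    · simp only [G, indicator_of_notMem hz, zero_add, ← ENNReal.ofReal_one]
      exact ENNReal.ofReal_le_ofReal (Real.rpow_le_one_of_one_le_of_nonpos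
        (by simpa using hz) ht)
  calc ∫⁻ x in B, ENNReal.ofReal (‖x - y‖ ^ t) ∂μ
      ≤ ∫⁻ x in B, (G (x - y) + 1) ∂μ := lintegral_mono fun x => hpt (x - y)
    _ = (∫⁻ x in B, G (x - y) ∂μ) + μ B := by
        rw [lintegral_add_right _ measurable_const, setLIntegral_one]
    _ ≤ (∫⁻ x, G (x - y) ∂μ) + μ B := by gcongr; exact Measure.restrict_le_self
    _ = _ := by rw [lintegral_sub_right_eq_self G y, lintegral_indicator measurableSet_ball]

lemma setLIntegral_lintegral_mul_norm_sub_rpow_le [NormedSpace ℝ E] [FiniteDimensional ℝ E]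
    [μ.IsAddHaarMeasure] {t : ℝ} (ht : t ≤ 0) (B : Set E)
    {f : E → ℝ≥0∞} (hf : AEMeasurable f μ) :
    ∫⁻ x in B, ∫⁻ y, f y * ENNReal.ofReal (‖x - y‖ ^ t) ∂μ ∂μ ≤
      ((∫⁻ z in ball 0 1, ENNReal.ofReal (‖z‖ ^ t) ∂μ) + μ B) * ∫⁻ y, f y ∂μ := by
  have hmeas : AEMeasurable (fun z : E × E => f z.2 * ENNReal.ofReal (‖z.1 - z.2‖ ^ t))
      ((μ.restrict B).prod μ) :=
    hf.comp_snd.mul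
      (by fun_prop : Measurable fun z : E × E => ENNReal.ofReal (‖z.1 - z.2‖ ^ t)).aemeasurable
  calc ∫⁻ x in B, ∫⁻ y, f y * ENNReal.ofReal (‖x - y‖ ^ t) ∂μ ∂μ
      = ∫⁻ y, f y * ∫⁻ x in B, ENNReal.ofReal (‖x - y‖ ^ t) ∂μ ∂μ := by
        rw [lintegral_lintegral_swap hmeas]
        exact lintegral_congr fun y => lintegral_const_mul _ (by fun_prop)
    _ ≤ ∫⁻ y, f y * ((∫⁻ z in ball 0 1, ENNReal.ofReal (‖z‖ ^ t) ∂μ) + μ B) ∂μ := by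
        gcongr with y; exact setLIntegral_norm_sub_rpow_le ht B y
    _ = _ := by rw [lintegral_mul_const'' _ hf, mul_comm]

end

lemma ofReal_integral_le_lintegral_ofReal {X : Type*} [MeasurableSpace X] {μ : Measure X}
    {f : X → ℝ} (hf : 0 ≤ᵐ[μ] f) :
    ENNReal.ofReal (∫ x, f x ∂μ) ≤ ∫⁻ x, ENNReal.ofReal (f x) ∂μ := by
  by_cases hi : Integrable f μ
  · exact (ofReal_integral_eq_lintegral_ofReal hi hf).le
  · simp [integral_undef hi]

namespace IsCapacitoryPotential

variable {d : ℕ} {α κ : ℝ} {V u : EuclideanSpace ℝ (Fin d) → ℝ}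

lemma ofReal_le_mul_lintegral_mul_norm_sub_rpow (hκ : 0 ≤ κ) (hV : ∀ y, 0 ≤ V y)
    (hu : IsCapacitoryPotential d α κ V u) :
    ∀ᵐ x, ENNReal.ofReal (u x) ≤
      ENNReal.ofReal κ * ∫⁻ y, ENNReal.ofReal (V y) * ENNReal.ofReal (‖x - y‖ ^ (α - d)) := by
  obtain ⟨-, hu01, hueq⟩ := hu
  filter_upwards [hueq] with x hx
  rw [hx, ENNReal.ofReal_mul hκ]
  gcongr
  refine (ofReal_integral_le_lintegral_ofReal (Filter.Eventually.of_forall fun y => ?_)).trans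
    (lintegral_mono fun y => ?_)
  · exact mul_nonneg (mul_nonneg (hV y) (sub_nonneg.2 (hu01 y).2)) (by positivity)
  · rw [← ENNReal.ofReal_mul (hV y)]
    refine ENNReal.ofReal_le_ofReal (mul_le_mul_of_nonneg_right ?_ (by positivity))
    exact mul_le_of_le_one_right (hV y) (by linarith [(hu01 y).1])

lemma setIntegral_le (hd : 1 ≤ d) (hα0 : 0 < α) (hαd : α ≤ d) (hκ : 0 ≤ κ)
    {B : Set (EuclideanSpace ℝ (Fin d))} (hB : volume B ≠ ∞) (hV0 : ∀ y, 0 ≤ V y)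
    (hV : Integrable V) (hu : IsCapacitoryPotential d α κ V u) :
    ∫ x in B, u x ≤
      κ * ((∫⁻ z : EuclideanSpace ℝ (Fin d) in ball 0 1, ENNReal.ofReal (‖z‖ ^ (α - d))) +
        volume B).toReal * ∫ y, V y := by
  set K := (∫⁻ z : EuclideanSpace ℝ (Fin d) in ball 0 1, ENNReal.ofReal (‖z‖ ^ (α - d))) +
    volume B
  have hK : K ≠ ∞ := ENNReal.add_ne_top.2 ⟨(lintegral_ball_norm_rpow_lt_top
    (by simpa using hd) (by simp; linarith)).ne, hB⟩
  have hlin : ∫⁻ x in B, ENNReal.ofReal (u x) ≤ ENNReal.ofReal (κ * K.toReal * ∫ y, V y) :=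
    calc ∫⁻ x in B, ENNReal.ofReal (u x)
        ≤ ∫⁻ x in B, ENNReal.ofReal κ *
            ∫⁻ y, ENNReal.ofReal (V y) * ENNReal.ofReal (‖x - y‖ ^ (α - d)) :=
          lintegral_mono_ae
            (ae_restrict_of_ae (hu.ofReal_le_mul_lintegral_mul_norm_sub_rpow hκ hV0))
      _ = ENNReal.ofReal κ * ∫⁻ x in B,
            ∫⁻ y, ENNReal.ofReal (V y) * ENNReal.ofReal (‖x - y‖ ^ (α - d)) :=
          lintegral_const_mul' _ _ ENNReal.ofReal_ne_top
      _ ≤ ENNReal.ofReal κ * (K * ∫⁻ y, ENNReal.ofReal (V y)) := by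
          gcongr
          exact setLIntegral_lintegral_mul_norm_sub_rpow_le (by linarith) B
            hV.aemeasurable.ennreal_ofReal
      _ = ENNReal.ofReal (κ * K.toReal * ∫ y, V y) := by
          rw [← ofReal_integral_eq_lintegral_ofReal hV (ae_of_all _ hV0), ENNReal.ofReal_mul
            (by positivity), ENNReal.ofReal_mul hκ, ENNReal.ofReal_toReal hK, mul_assoc]
  obtain ⟨hu_meas, hu01, -⟩ := hu
  rw [integral_eq_lintegral_of_nonneg_ae (ae_of_all _ fun x => (hu01 x).1)
    hu_meas.aestronglyMeasurable.restrict]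
  exact ENNReal.toReal_le_of_le_ofReal
    (mul_nonneg (by positivity) (integral_nonneg hV0)) hlin

end IsCapacitoryPotential

section

variable {X : Type*} [MeasurableSpace X] {μ : Measure X}

lemma integral_sub_integral_mul_one_sub {v u : X → ℝ} (hv : Integrable v μ)
    (hu : AEStronglyMeasurable u μ) (hu01 : ∀ x, 0 ≤ u x ∧ u x ≤ 1) (ε : ℝ) :
    ε * ∫ x, v x ∂μ - ∫ x, ε * v x * (1 - u x) ∂μ = ε * ∫ x, v x * u x ∂μ := by
  have hvu : Integrable (fun x => v x * u x) μ :=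
    hv.mul_bdd hu (c := 1) (ae_of_all _ fun x => by
      rw [Real.norm_of_nonneg (hu01 x).1]; exact (hu01 x).2)
  have hsplit : ∫ x, ε * v x * (1 - u x) ∂μ = ∫ x, ε * v x ∂μ - ∫ x, ε * (v x * u x) ∂μ := by
    rw [← integral_sub (hv.const_mul ε) (hvu.const_mul ε)]
    congr 1 with x
    ring
  rw [hsplit, integral_const_mul, integral_const_mul]
  ring

lemma integral_mul_le_eLpNorm_mul_setIntegral_rpow {p q : ℝ} (hpq : p.HolderConjugate q)
    {v u : X → ℝ} {B : Set X} (hBm : MeasurableSet B) (hB : μ B ≠ ∞)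
    (hvp : MemLp v (ENNReal.ofReal p) μ) (hv0 : ∀ x, 0 ≤ v x) (hsupp : Function.support v ⊆ B)
    (hu : AEStronglyMeasurable u μ) (hu01 : ∀ x, 0 ≤ u x ∧ u x ≤ 1) :
    ∫ x, v x * u x ∂μ ≤ (eLpNorm v (ENNReal.ofReal p) μ).toReal * (∫ x in B, u x ∂μ) ^ (1 / q) := by
  have : IsFiniteMeasure (μ.restrict B) := isFiniteMeasure_restrict.2 hB
  have hu_norm : ∀ᵐ x ∂μ.restrict B, ‖u x‖ ≤ 1 := ae_of_all _ fun x => by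
    rw [Real.norm_of_nonneg (hu01 x).1]; exact (hu01 x).2
  set g := B.indicator u
  have hg01 (x : X) : 0 ≤ g x ∧ g x ≤ 1 := by
    by_cases hx : x ∈ B <;> simp [g, hx, hu01 x]
  have hvg : ∫ x, v x * u x ∂μ = ∫ x, v x * g x ∂μ := by
    congr 1 with x
    by_cases hx : x ∈ B
    · simp [g, hx]
    · simp [g, hx, Function.notMem_support.1 fun h => hx (hsupp h)]
  have hgq : MemLp g (ENNReal.ofReal q) μ :=
    (memLp_indicator_iff_restrict hBm).2 (MemLp.of_bound hu.restrict 1 hu_norm)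
  have hg_rpow : ∫ x, g x ^ q ∂μ ≤ ∫ x in B, u x ∂μ := by
    rw [← integral_indicator hBm]
    refine integral_mono_of_nonneg (ae_of_all _ fun x => Real.rpow_nonneg (hg01 x).1 q)
      (IntegrableOn.integrable_indicator (Integrable.of_bound hu.restrict 1 hu_norm) hBm)
      (ae_of_all _ fun x => Real.rpow_le_self_of_le_one (hg01 x).1 (hg01 x).2 hpq.symm.lt.le)
  have hv_norm : (∫ x, v x ^ p ∂μ) ^ (1 / p) = (eLpNorm v (ENNReal.ofReal p) μ).toReal := by
    rw [hvp.eLpNorm_eq_integral_rpow_norm (by simpa using hpq.pos) ENNReal.ofReal_ne_top,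
      ENNReal.toReal_ofReal (by positivity), ENNReal.toReal_ofReal hpq.nonneg, one_div]
    simp_rw [Real.norm_of_nonneg (hv0 _)]
  calc ∫ x, v x * u x ∂μ = ∫ x, v x * g x ∂μ := hvg
    _ ≤ (∫ x, v x ^ p ∂μ) ^ (1 / p) * (∫ x, g x ^ q ∂μ) ^ (1 / q) :=
        integral_mul_le_Lp_mul_Lq_of_nonneg hpq (ae_of_all _ hv0)
          (ae_of_all _ fun x => (hg01 x).1) hvp hgq
    _ ≤ _ := by
        rw [hv_norm]
        gcongr
        · exact integral_nonneg fun x => Real.rpow_nonneg (hg01 x).1 q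
        · exact one_div_nonneg.2 hpq.symm.nonneg

end

theorem scatteringLength_small_coupling_expansion_general (d : ℕ) (hd : 1 ≤ d) (α κ : ℝ)
    (hα0 : 0 < α) (hαd : α < d) (hκ : 0 < κ)
    (p q : ℝ) (hp : 1 < p) (hpq : 1 / p + 1 / q = 1)
    (B : Set (EuclideanSpace ℝ (Fin d))) (hB : Bornology.IsBounded B)
    (hBm : MeasurableSet B)
    (v : EuclideanSpace ℝ (Fin d) → ℝ) (hv1 : Integrable v)
    (hvp : MemLp v (ENNReal.ofReal p) (volume : Measure (EuclideanSpace ℝ (Fin d))))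
    (hv0 : ∀ x, 0 ≤ v x) (hsupp : Function.support v ⊆ B) :
    ∃ C > (0 : ℝ), ∀ ε > (0 : ℝ), ∀ u : EuclideanSpace ℝ (Fin d) → ℝ,
      IsCapacitoryPotential d α κ (fun x => ε * v x) u →
        0 ≤ ε * (∫ x : EuclideanSpace ℝ (Fin d), v x) -
            (∫ x : EuclideanSpace ℝ (Fin d), ε * v x * (1 - u x)) ∧
          ε * (∫ x : EuclideanSpace ℝ (Fin d), v x) -
              (∫ x : EuclideanSpace ℝ (Fin d), ε * v x * (1 - u x)) ≤
            C * ε ^ (1 + 1 / q) *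
              (eLpNorm v (ENNReal.ofReal p)
                (volume : Measure (EuclideanSpace ℝ (Fin d)))).toReal *
              (∫ x : EuclideanSpace ℝ (Fin d), v x) ^ (1 / q) := by
  have hconj : p.HolderConjugate q :=
    Real.holderConjugate_iff.2 ⟨hp, by simpa only [one_div] using hpq⟩
  set K := ((∫⁻ z : EuclideanSpace ℝ (Fin d) in ball 0 1, ENNReal.ofReal (‖z‖ ^ (α - d))) +
    volume B).toReal
  have hq : 0 ≤ 1 / q := one_div_nonneg.2 hconj.symm.nonneg
  have hv : 0 ≤ ∫ x, v x := integral_nonneg hv0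
  refine ⟨(κ * K) ^ (1 / q) + 1, by positivity, fun ε hε u hu => ?_⟩
  have hu_meas : AEStronglyMeasurable u := hu.1.aestronglyMeasurable
  have hu01 := hu.2.1
  have hB_mass : ∫ x in B, u x ≤ κ * K * (ε * ∫ x, v x) := by
    simpa only [integral_const_mul] using hu.setIntegral_le hd hα0 hαd.le hκ.le
      hB.measure_lt_top.ne (fun x => mul_nonneg hε.le (hv0 x)) (hv1.const_mul ε)
  have hHolder := integral_mul_le_eLpNorm_mul_setIntegral_rpow hconj hBm hB.measure_lt_top.ne
    hvp hv0 hsupp hu_meas hu01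
  rw [integral_sub_integral_mul_one_sub hv1 hu_meas hu01]
  refine ⟨mul_nonneg hε.le (integral_nonneg fun x => mul_nonneg (hv0 x) (hu01 x).1), ?_⟩
  calc ε * ∫ x, v x * u x
      ≤ ε * ((eLpNorm v (ENNReal.ofReal p)).toReal * (κ * K * (ε * ∫ x, v x)) ^ (1 / q)) := by
        gcongr
        exact hHolder.trans (by gcongr; exact setIntegral_nonneg hBm fun x _ => (hu01 x).1)
    _ = (κ * K) ^ (1 / q) * ε ^ (1 + 1 / q) * (eLpNorm v (ENNReal.ofReal p)).toReal *
          (∫ x, v x) ^ (1 / q) := by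
        rw [Real.mul_rpow (by positivity) (by positivity), Real.mul_rpow hε.le hv,
          Real.rpow_add hε, Real.rpow_one]
        ring
    _ ≤ _ := by gcongr; linarith

/-- For `v ≥ 0` in `L^p ∩ L¹` with bounded support, there is
`C = C(B,d,α,κ,p) > 0` such that for every `ε > 0` and every capacitory potential `u_ε` of
`εv`, the scattering length `Γ(εv) = ∫ εv (1 - u_ε)` satisfies
`0 ≤ ε ‖v‖₁ - Γ(εv) ≤ C ε^(1+1/q) ‖v‖_p ‖v‖₁^(1/q)`. -/
theorem scatteringLength_small_coupling_expansion (d : ℕ) (hd : 1 ≤ d) (α κ : ℝ)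
    (hα0 : 0 < α) (hα2 : α < 2) (hαd : α < d) (hκ : 0 < κ)
    (p q : ℝ) (hp : 1 < p) (hpq : 1 / p + 1 / q = 1)
    (B : Set (EuclideanSpace ℝ (Fin d))) (hB : Bornology.IsBounded B)
    (hBm : MeasurableSet B)
    (v : EuclideanSpace ℝ (Fin d) → ℝ) (hv1 : Integrable v)
    (hvp : MemLp v (ENNReal.ofReal p) (volume : Measure (EuclideanSpace ℝ (Fin d))))
    (hv0 : ∀ x, 0 ≤ v x) (hsupp : Function.support v ⊆ B) :
    ∃ C > (0 : ℝ), ∀ ε > (0 : ℝ), ∀ u : EuclideanSpace ℝ (Fin d) → ℝ,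
      IsCapacitoryPotential d α κ (fun x => ε * v x) u →
        0 ≤ ε * (∫ x : EuclideanSpace ℝ (Fin d), v x) -
            (∫ x : EuclideanSpace ℝ (Fin d), ε * v x * (1 - u x)) ∧
          ε * (∫ x : EuclideanSpace ℝ (Fin d), v x) -
              (∫ x : EuclideanSpace ℝ (Fin d), ε * v x * (1 - u x)) ≤
            C * ε ^ (1 + 1 / q) *
              (eLpNorm v (ENNReal.ofReal p)
                (volume : Measure (EuclideanSpace ℝ (Fin d)))).toReal *
              (∫ x : EuclideanSpace ℝ (Fin d), v x) ^ (1 / q) :=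
  scatteringLength_small_coupling_expansion_general d hd α κ hα0 hαd hκ p q hp hpq B hB hBm v hv1
    hvp hv0 hsupp
end

section
/- Let d ≥ 1 and α ∈ (0,2) with α < d, and let c > 0. Then there is a constant C = C(c,d,α) > 0 such that for every t > 0, every x, z ∈ ℝᵈ, and every measurable function p : ℝᵈ → [0,∞) satisfying p(y) ≤ c t^{−d/α} for all y and p(y) ≤ c t |x−y|^{−d−α} for all y ≠ x, one has ∫_{ℝᵈ} p(y) |y−z|^{α−d} dy ≤ C (t^{1−d/α} + t^{−(d−α)/α}). In particular, since the transition density p(t,x,·) of the symmetric α-stable process satisfies both bounds, lim_{t→∞} sup_{x,z ∈ ℝᵈ} ∫_{ℝᵈ} p(t,x,y) |y−z|^{α−d} dy = 0. -/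
/-!
Put `r = t^(1/α)`. The two bounds on `p` combine into the single profile bound
`p y ≤ 2^(d+α) c t^(-d/α) (1 + |y - x| / r)^(-d-α)`. Substituting `y = x + r u` turns the integral
into `2^(d+α) c t^(1-d/α)` times `∫ (1 + |u|)^(-d-α) |u - w|^(α-d) du` with `w = (z - x) / r`.
This is bounded uniformly in `w`: on `|u - w| < 1` use `(1 + |u|)^(-d-α) ≤ 1` and the local
integrability of `|·|^(α-d)`, elsewhere use `|u - w|^(α-d) ≤ 1` and the integrability of the
profile. Since `1 - d/α < 0`, the bound tends to `0` as `t → ∞`.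
-/

open MeasureTheory ENNReal Filter Metric Module

theorem le_two_rpow_mul_one_add_rpow_neg {q B a s : ℝ} (hB : 0 ≤ B) (ha : 0 ≤ a) (hs : 0 ≤ s)
    (h₁ : q ≤ B) (h₂ : 0 < s → q ≤ B * s ^ (-a)) : q ≤ 2 ^ a * B * (1 + s) ^ (-a) := by
  have h2a : (2 : ℝ) ^ a * 2 ^ (-a) = 1 := by
    rw [← Real.rpow_add two_pos, add_neg_cancel, Real.rpow_zero]
  rcases le_or_gt s 1 with hs1 | hs1
  · have : (2 : ℝ) ^ (-a) ≤ (1 + s) ^ (-a) :=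
      Real.rpow_le_rpow_of_nonpos (by positivity) (by linarith) (neg_nonpos.2 ha)
    calc q ≤ B := h₁
      _ = 2 ^ a * B * 2 ^ (-a) := by rw [mul_comm _ B, mul_assoc, h2a, mul_one]
      _ ≤ 2 ^ a * B * (1 + s) ^ (-a) := by gcongr
  · have : (2 * s) ^ (-a) ≤ (1 + s) ^ (-a) :=
      Real.rpow_le_rpow_of_nonpos (by positivity) (by linarith) (neg_nonpos.2 ha)
    calc q ≤ B * s ^ (-a) := h₂ (by linarith)
      _ = 2 ^ a * B * (2 * s) ^ (-a) := by
        rw [Real.mul_rpow zero_le_two hs, mul_comm (2 ^ a) B, mul_assoc, ← mul_assoc (2 ^ a), h2a,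
          one_mul]
      _ ≤ 2 ^ a * B * (1 + s) ^ (-a) := by gcongr

theorem mul_rpow_neg_sub_eq {t α ρ D : ℝ} (ht : 0 < t) (hα : 0 < α) (hρ : 0 ≤ ρ) :
    t * ρ ^ (-D - α) = t ^ (-D / α) * (ρ / t ^ α⁻¹) ^ (-(D + α)) := by
  have hexp : -D / α - α⁻¹ * -(D + α) = 1 := by field_simp; ring
  rw [Real.div_rpow hρ (by positivity), ← Real.rpow_mul ht.le, mul_div_left_comm,
    ← Real.rpow_sub ht, hexp, Real.rpow_one, neg_add', mul_comm]

theorem ofReal_rpow_norm_le_indicator_add_one {E : Type*} [SeminormedAddCommGroup E]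
    {β : ℝ} (hβ : β ≤ 0) (v : E) :
    ENNReal.ofReal (‖v‖ ^ β) ≤
      (ball (0 : E) 1).indicator (fun u => ENNReal.ofReal (‖u‖ ^ β)) v + 1 := by
  by_cases hv : v ∈ ball (0 : E) 1
  · rw [Set.indicator_of_mem hv]
    exact le_self_add
  · rw [Set.indicator_of_notMem hv, zero_add, ← ENNReal.ofReal_one]
    exact ENNReal.ofReal_le_ofReal (Real.rpow_le_one_of_one_le_of_nonpos (by simpa using hv) hβ)

theorem lintegral_mul_rpow_norm_sub_le {E : Type*} [NormedAddCommGroup E] [MeasurableSpace E]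
    [BorelSpace E] (μ : Measure E) [μ.IsAddRightInvariant] {φ : E → ℝ≥0∞} {M : ℝ≥0∞}
    (hφ : ∀ u, φ u ≤ M) {β : ℝ} (hβ : β ≤ 0) (w : E) :
    ∫⁻ u, φ u * ENNReal.ofReal (‖u - w‖ ^ β) ∂μ ≤
      M * ∫⁻ u in ball 0 1, ENNReal.ofReal (‖u‖ ^ β) ∂μ + ∫⁻ u, φ u ∂μ := by
  set k : E → ℝ≥0∞ := (ball (0 : E) 1).indicator fun u => ENNReal.ofReal (‖u‖ ^ β)
  have hk : Measurable fun u => k (u - w) :=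
    ((by fun_prop : Measurable fun u : E => ENNReal.ofReal (‖u‖ ^ β)).indicator
      measurableSet_ball).comp (measurable_sub_const w)
  calc ∫⁻ u, φ u * ENNReal.ofReal (‖u - w‖ ^ β) ∂μ
      ≤ ∫⁻ u, M * k (u - w) + φ u ∂μ := by
        refine lintegral_mono fun u => ?_
        calc φ u * ENNReal.ofReal (‖u - w‖ ^ β) ≤ φ u * (k (u - w) + 1) :=
              mul_le_mul_right (ofReal_rpow_norm_le_indicator_add_one hβ _) _
          _ ≤ M * k (u - w) + φ u := by rw [mul_add, mul_one]; gcongr; exact hφ u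
    _ = M * ∫⁻ u, k u ∂μ + ∫⁻ u, φ u ∂μ := by
        rw [lintegral_add_left (hk.const_mul M), lintegral_const_mul M hk,
          lintegral_sub_right_eq_self k w]
    _ = _ := by rw [lintegral_indicator measurableSet_ball]

section HaarMeasure

variable {E : Type*} [NormedAddCommGroup E] [NormedSpace ℝ E] [FiniteDimensional ℝ E]
  [MeasurableSpace E] [BorelSpace E] (μ : Measure E) [μ.IsAddHaarMeasure]

theorem ofReal_pow_finrank_mul_lintegral_comp_add_smul (f : E → ℝ≥0∞) (x : E) {r : ℝ}
    (hr : 0 < r) :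
    ENNReal.ofReal (r ^ finrank ℝ E) * ∫⁻ u, f (x + r • u) ∂μ = ∫⁻ y, f y ∂μ := by
  have hrn : 0 < r ^ finrank ℝ E := pow_pos hr _
  have hmap : ∫⁻ u, f (x + r • u) ∂μ = ∫⁻ v, f (x + v) ∂(Measure.map (r • ·) μ) :=
    (lintegral_map_equiv (fun v => f (x + v))
      (Homeomorph.smul (isUnit_iff_ne_zero.2 hr.ne').unit).toMeasurableEquiv).symm
  rw [hmap, Measure.map_addHaar_smul μ hr.ne', lintegral_smul_measure, lintegral_add_left_eq_self,
    abs_of_pos (inv_pos.2 hrn), smul_eq_mul, ← mul_assoc, ← ENNReal.ofReal_mul hrn.le,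
    mul_inv_cancel₀ hrn.ne', ENNReal.ofReal_one, one_mul]

noncomputable def stableRieszConst (α : ℝ) : ℝ≥0∞ :=
  ∫⁻ u in ball 0 1, ENNReal.ofReal (‖u‖ ^ (α - finrank ℝ E)) ∂μ +
    ∫⁻ u, ENNReal.ofReal ((1 + ‖u‖) ^ (-(finrank ℝ E + α))) ∂μ

theorem stableRieszConst_lt_top (hn : 1 ≤ finrank ℝ E) {α : ℝ} (hα : 0 < α) :
    stableRieszConst μ α < ∞ := by
  refine ENNReal.add_lt_top.2 ⟨?_, finite_integral_one_add_norm (by linarith)⟩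
  have hmeas : Measurable fun u : E => ‖u‖ ^ (α - finrank ℝ E) := by fun_prop
  refine Integrable.lintegral_lt_top (integrableOn_ball_of_norm_le_rpow hn (C := 1)
    (α := finrank ℝ E - α) (by linarith) (ae_of_all _ fun u => ?_) hmeas.aestronglyMeasurable)
  rw [Real.norm_of_nonneg (by positivity), one_mul, neg_sub]

theorem lintegral_mul_rpow_norm_sub_le_of_le_profile {p : E → ℝ} {A r α : ℝ} (hA : 0 ≤ A)
    (hr : 0 < r) (hα : 0 ≤ α) (hαn : α ≤ finrank ℝ E) (x z : E)
    (hp : ∀ y, p y ≤ A * (1 + ‖y - x‖ / r) ^ (-(finrank ℝ E + α))) :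
    ∫⁻ y, ENNReal.ofReal (p y * ‖y - z‖ ^ (α - finrank ℝ E)) ∂μ ≤
      ENNReal.ofReal (A * r ^ α) * stableRieszConst μ α := by
  set n : ℝ := (finrank ℝ E : ℝ)
  set φ : E → ℝ≥0∞ := fun u => ENNReal.ofReal ((1 + ‖u‖) ^ (-(n + α)))
  set w : E := r⁻¹ • (z - x)
  have hφ : ∀ u, φ u ≤ 1 := fun u => ENNReal.ofReal_le_one.2 <|
    Real.rpow_le_one_of_one_le_of_nonpos (le_add_of_nonneg_right (norm_nonneg u))
      (neg_nonpos.2 (by positivity))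
  have hrescale : ∀ u, ENNReal.ofReal (A * (1 + ‖x + r • u - x‖ / r) ^ (-(n + α)) *
      ‖x + r • u - z‖ ^ (α - n)) =
        ENNReal.ofReal (A * r ^ (α - n)) * (φ u * ENNReal.ofReal (‖u - w‖ ^ (α - n))) := by
    intro u
    have hzu : x + r • u - z = r • (u - w) := by
      simp only [w, smul_sub, smul_inv_smul₀ hr.ne']; abel
    rw [add_sub_cancel_left, hzu, norm_smul, norm_smul, Real.norm_of_nonneg hr.le,
      mul_div_cancel_left₀ _ hr.ne', Real.mul_rpow hr.le (norm_nonneg _),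
      ← ENNReal.ofReal_mul (by positivity), ← ENNReal.ofReal_mul (by positivity)]
    ring_nf
  calc ∫⁻ y, ENNReal.ofReal (p y * ‖y - z‖ ^ (α - n)) ∂μ
      ≤ ∫⁻ y, ENNReal.ofReal (A * (1 + ‖y - x‖ / r) ^ (-(n + α)) * ‖y - z‖ ^ (α - n)) ∂μ :=
        lintegral_mono fun y => ENNReal.ofReal_le_ofReal <|
          mul_le_mul_of_nonneg_right (hp y) (by positivity)
    _ = ENNReal.ofReal (r ^ finrank ℝ E) * (ENNReal.ofReal (A * r ^ (α - n)) *
          ∫⁻ u, φ u * ENNReal.ofReal (‖u - w‖ ^ (α - n)) ∂μ) := by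
        rw [← ofReal_pow_finrank_mul_lintegral_comp_add_smul μ _ x hr]
        simp_rw [hrescale]
        rw [lintegral_const_mul' _ _ ENNReal.ofReal_ne_top]
    _ ≤ ENNReal.ofReal (r ^ finrank ℝ E) * (ENNReal.ofReal (A * r ^ (α - n)) *
          (1 * ∫⁻ u in ball 0 1, ENNReal.ofReal (‖u‖ ^ (α - n)) ∂μ + ∫⁻ u, φ u ∂μ)) := by
        gcongr
        exact lintegral_mul_rpow_norm_sub_le μ hφ (by linarith) w
    _ = ENNReal.ofReal (A * r ^ α) * stableRieszConst μ α := by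
        rw [one_mul, ← mul_assoc, ← ENNReal.ofReal_mul (by positivity), ← Real.rpow_natCast,
          mul_left_comm, ← Real.rpow_add hr, add_sub_cancel]
        rfl

theorem lintegral_mul_rpow_norm_sub_le_of_heatKernel_bounds {c α t : ℝ} (hc : 0 ≤ c)
    (hα0 : 0 < α) (hαn : α ≤ finrank ℝ E) (ht : 0 < t) (x z : E) {p : E → ℝ}
    (h₁ : ∀ y, p y ≤ c * t ^ (-(finrank ℝ E : ℝ) / α))
    (h₂ : ∀ y, y ≠ x → p y ≤ c * t * ‖x - y‖ ^ (-(finrank ℝ E : ℝ) - α)) :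
    ∫⁻ y, ENNReal.ofReal (p y * ‖y - z‖ ^ (α - finrank ℝ E)) ∂μ ≤
      ENNReal.ofReal (2 ^ ((finrank ℝ E : ℝ) + α) * c * t ^ (1 - (finrank ℝ E : ℝ) / α)) *
        stableRieszConst μ α := by
  set n : ℝ := (finrank ℝ E : ℝ)
  have hr : 0 < t ^ α⁻¹ := by positivity
  have hscale : 2 ^ (n + α) * c * t ^ (-n / α) * (t ^ α⁻¹) ^ α =
      2 ^ (n + α) * c * t ^ (1 - n / α) := by
    rw [← Real.rpow_mul ht.le, inv_mul_cancel₀ hα0.ne', Real.rpow_one, mul_assoc _ (t ^ _),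
      ← Real.rpow_add_one ht.ne', neg_div, neg_add_eq_sub]
  rw [← hscale]
  refine lintegral_mul_rpow_norm_sub_le_of_le_profile μ (by positivity) hr hα0.le hαn x z
    fun y => ?_
  rw [mul_assoc (2 ^ _)]
  refine le_two_rpow_mul_one_add_rpow_neg (by positivity) (by positivity) (by positivity) (h₁ y)
    fun hy => ?_
  have hyx : y ≠ x := fun h => by simp [h] at hy
  rw [mul_assoc, ← mul_rpow_neg_sub_eq ht hα0 (norm_nonneg _), norm_sub_rev, ← mul_assoc]
  exact h₂ y hyx

theorem exists_lintegral_mul_rpow_norm_sub_le_of_heatKernel_bounds (hn : 1 ≤ finrank ℝ E)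
    {c α : ℝ} (hc : 0 ≤ c) (hα0 : 0 < α) (hαn : α ≤ finrank ℝ E) :
    ∃ C ≥ (0 : ℝ), ∀ t > (0 : ℝ), ∀ x z : E, ∀ p : E → ℝ,
      (∀ y, p y ≤ c * t ^ (-(finrank ℝ E : ℝ) / α)) →
      (∀ y, y ≠ x → p y ≤ c * t * ‖x - y‖ ^ (-(finrank ℝ E : ℝ) - α)) →
      ∫⁻ y, ENNReal.ofReal (p y * ‖y - z‖ ^ (α - finrank ℝ E)) ∂μ ≤
        ENNReal.ofReal (C * t ^ (1 - (finrank ℝ E : ℝ) / α)) := by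
  refine ⟨2 ^ ((finrank ℝ E : ℝ) + α) * c * (stableRieszConst μ α).toReal, by positivity,
    fun t ht x z p h₁ h₂ => ?_⟩
  have hbound := lintegral_mul_rpow_norm_sub_le_of_heatKernel_bounds μ hc hα0 hαn ht x z h₁ h₂
  rwa [← ENNReal.ofReal_toReal (stableRieszConst_lt_top μ hn hα0).ne,
    ← ENNReal.ofReal_mul (by positivity), mul_right_comm (2 ^ _ * c)] at hbound

end HaarMeasure

theorem tendsto_zero_of_le_ofReal_mul_rpow {f : ℝ → ℝ≥0∞} {C a : ℝ} (ha : a < 0)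
    (hf : ∀ᶠ t in atTop, f t ≤ ENNReal.ofReal (C * t ^ a)) : Tendsto f atTop (nhds 0) := by
  have hlim : Tendsto (fun t : ℝ => ENNReal.ofReal (C * t ^ a)) atTop (nhds 0) := by
    simpa using ENNReal.tendsto_ofReal ((tendsto_rpow_neg_atTop (neg_pos.2 ha)).const_mul C)
  exact tendsto_of_tendsto_of_tendsto_of_le_of_le' tendsto_const_nhds hlim
    (Eventually.of_forall fun _ => zero_le) hf

theorem heat_kernel_riesz_integral_bound_general (d : ℕ) (hd : 1 ≤ d) (α : ℝ)
    (hα0 : 0 < α) (hαd : α < d) (c : ℝ) (hc : 0 < c) :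
    (∃ C > (0 : ℝ), ∀ t > (0 : ℝ), ∀ x z : EuclideanSpace ℝ (Fin d),
      ∀ p : EuclideanSpace ℝ (Fin d) → ℝ, Measurable p → (∀ y, 0 ≤ p y) →
        (∀ y, p y ≤ c * t ^ (-(d : ℝ) / α)) →
        (∀ y, y ≠ x → p y ≤ c * t * ‖x - y‖ ^ (-(d : ℝ) - α)) →
        (∫⁻ y : EuclideanSpace ℝ (Fin d),
            ENNReal.ofReal (p y * ‖y - z‖ ^ (α - d))) ≤
          ENNReal.ofReal (C * (t ^ (1 - (d : ℝ) / α) + t ^ (-((d : ℝ) - α) / α)))) ∧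
    (∀ p : ℝ → EuclideanSpace ℝ (Fin d) → EuclideanSpace ℝ (Fin d) → ℝ,
      (∀ t > (0 : ℝ), ∀ x, Measurable (p t x)) →
      (∀ t > (0 : ℝ), ∀ x y, 0 ≤ p t x y) →
      (∀ t > (0 : ℝ), ∀ x y, p t x y ≤ c * t ^ (-(d : ℝ) / α)) →
      (∀ t > (0 : ℝ), ∀ x y, x ≠ y → p t x y ≤ c * t * ‖x - y‖ ^ (-(d : ℝ) - α)) →
      Tendsto (fun t : ℝ => ⨆ x : EuclideanSpace ℝ (Fin d),
          ⨆ z : EuclideanSpace ℝ (Fin d),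
            ∫⁻ y : EuclideanSpace ℝ (Fin d),
              ENNReal.ofReal (p t x y * ‖y - z‖ ^ (α - d)))
        atTop (nhds 0)) := by
  obtain ⟨C₀, hC₀, hbound⟩ :=
    exists_lintegral_mul_rpow_norm_sub_le_of_heatKernel_bounds
      (volume : Measure (EuclideanSpace ℝ (Fin d))) (by simpa using hd) hc.le hα0
      (by simpa using hαd.le)
  simp only [finrank_euclideanSpace_fin] at hbound
  refine ⟨⟨C₀ + 1, by positivity, fun t ht x z p _ _ h₁ h₂ =>
    (hbound t ht x z p h₁ h₂).trans (ENNReal.ofReal_le_ofReal ?_)⟩, fun p _ _ h₁ h₂ => ?_⟩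
  · have : (0 : ℝ) ≤ t ^ (-((d : ℝ) - α) / α) := by positivity
    have : (0 : ℝ) ≤ t ^ (1 - (d : ℝ) / α) := by positivity
    nlinarith
  · refine tendsto_zero_of_le_ofReal_mul_rpow (C := C₀) (a := 1 - d / α) ?_ ?_
    · rw [sub_neg, one_lt_div hα0]; exact hαd
    · filter_upwards [eventually_gt_atTop 0] with t ht
      exact iSup₂_le fun x z => hbound t ht x z (p t x) (h₁ t ht x) fun y hy => h₂ t ht x y hy.symm

/-- There is `C = C(c,d,α) > 0` such that any nonnegative measurable `p`
satisfying the two standard stable heat-kernel upper bounds `p(y) ≤ c t^(-d/α)` and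
`p(y) ≤ c t ‖x-y‖^(-d-α)` (for `y ≠ x`) satisfies
`∫ p(y) ‖y-z‖^(α-d) dy ≤ C (t^(1-d/α) + t^(-(d-α)/α))`.  In particular, for any family
`p t x y` satisfying these bounds for all `t > 0`, the supremum over `x, z` of
`∫ p(t,x,y) ‖y-z‖^(α-d) dy` tends to `0` as `t → ∞`. -/
theorem heat_kernel_riesz_integral_bound (d : ℕ) (hd : 1 ≤ d) (α : ℝ)
    (hα0 : 0 < α) (hα2 : α < 2) (hαd : α < d) (c : ℝ) (hc : 0 < c) :
    (∃ C > (0 : ℝ), ∀ t > (0 : ℝ), ∀ x z : EuclideanSpace ℝ (Fin d),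
      ∀ p : EuclideanSpace ℝ (Fin d) → ℝ, Measurable p → (∀ y, 0 ≤ p y) →
        (∀ y, p y ≤ c * t ^ (-(d : ℝ) / α)) →
        (∀ y, y ≠ x → p y ≤ c * t * ‖x - y‖ ^ (-(d : ℝ) - α)) →
        (∫⁻ y : EuclideanSpace ℝ (Fin d),
            ENNReal.ofReal (p y * ‖y - z‖ ^ (α - d))) ≤
          ENNReal.ofReal (C * (t ^ (1 - (d : ℝ) / α) + t ^ (-((d : ℝ) - α) / α)))) ∧
    (∀ p : ℝ → EuclideanSpace ℝ (Fin d) → EuclideanSpace ℝ (Fin d) → ℝ,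
      (∀ t > (0 : ℝ), ∀ x, Measurable (p t x)) →
      (∀ t > (0 : ℝ), ∀ x y, 0 ≤ p t x y) →
      (∀ t > (0 : ℝ), ∀ x y, p t x y ≤ c * t ^ (-(d : ℝ) / α)) →
      (∀ t > (0 : ℝ), ∀ x y, x ≠ y → p t x y ≤ c * t * ‖x - y‖ ^ (-(d : ℝ) - α)) →
      Tendsto (fun t : ℝ => ⨆ x : EuclideanSpace ℝ (Fin d),
          ⨆ z : EuclideanSpace ℝ (Fin d),
            ∫⁻ y : EuclideanSpace ℝ (Fin d),
              ENNReal.ofReal (p t x y * ‖y - z‖ ^ (α - d)))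
        atTop (nhds 0)) :=
  heat_kernel_riesz_integral_bound_general d hd α hα0 hαd c hc
end
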